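/- Let μ be an eigenvalue of the Dirichlet operator D f = -f'' + V f on [0,l] with f(0)=f(l)=0. Then u₁(l;μ) = 0, and the derivative with respect to z of u₁(l;z) at z = μ equals u₂(l;μ) · ∫₀ˡ u₁(s;μ)² ds, which is nonzero; in particular μ is a simple zero of the entire function z ↦ u₁(l;z). -/

import Mathlib

/-!
If `f` is a Dirichlet eigenfunction, then `f - f'(0) u₁(·;μ)` solves the equation with zero Cauchy
data at `0`, so it vanishes and `u₁(l;μ) = 0`. The Wronskian identity for `u₁(·;z)` and `u₁(·;μ)`
gives `u₁'(l;μ) u₁(l;z) = (z - μ) I(z)` with `I(z) = ∫₀ˡ u₁(s;z) u₁(s;μ) ds`, and the one for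
`u₁(·;μ)` and `u₂(·;μ)` gives `u₁'(l;μ) u₂(l;μ) = 1`. Hence `u₁(l;z) = u₂(l;μ) (z - μ) I(z)`, whose
derivative at `μ` is `u₂(l;μ) I(μ)` once `I` is continuous at `μ`. Both this continuity and the
uniqueness of the Cauchy problem come from a Gronwall estimate for the merely integrable weight
`1 + |V - z|`. Finally `u₁(·;μ)` is real, since its conjugate solves the same Cauchy problem, so
`I(μ) = ∫₀ˡ u₁(s;μ)² ds > 0`.
-/

open MeasureTheory Set intervalIntegral

theorem MeasureTheory.IntegrableOn.intervalIntegrable_of_mem {E : Type*} [NormedAddCommGroup E]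
    {f : ℝ → E} {a b x y : ℝ} (hf : IntegrableOn f (Icc a b)) (hx : x ∈ Icc a b)
    (hy : y ∈ Icc a b) : IntervalIntegrable f volume x y :=
  (hf.mono_set (uIcc_subset_Icc hx hy)).intervalIntegrable

section Gronwall

variable {a b ε : ℝ} {w u : ℝ → ℝ}

theorem le_two_mul_of_le_add_integral (hab : a ≤ b) (hw : IntegrableOn w (Icc a b))
    (hw₀ : ∀ t ∈ Icc a b, 0 ≤ w t) (hw_half : ∫ t in a..b, w t ≤ 1 / 2)
    (hu : ContinuousOn u (Icc a b)) (hu₀ : ∀ t ∈ Icc a b, 0 ≤ u t)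
    (h : ∀ x ∈ Icc a b, u x ≤ ε + ∫ t in a..x, w t * u t) :
    ∀ x ∈ Icc a b, u x ≤ 2 * ε := by
  obtain ⟨m, hm, hmax⟩ := isCompact_Icc.exists_isMaxOn (nonempty_Icc.2 hab) hu
  have ha : a ∈ Icc a b := left_mem_Icc.2 hab
  have hmass : ∫ t in a..m, w t ≤ 1 / 2 :=
    (integral_mono_interval le_rfl hm.1 hm.2
      ((ae_restrict_iff' measurableSet_Ioc).2
        (.of_forall fun t ht => hw₀ t (Ioc_subset_Icc_self ht)))
      (hw.intervalIntegrable_of_mem ha (right_mem_Icc.2 hab))).trans hw_half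
  have hwu : ∫ t in a..m, w t * u t ≤ (1 / 2) * u m :=
    calc ∫ t in a..m, w t * u t ≤ ∫ t in a..m, w t * u m :=
          integral_mono_on hm.1
            ((hw.mul_continuousOn hu isCompact_Icc).intervalIntegrable_of_mem ha hm)
            ((hw.intervalIntegrable_of_mem ha hm).mul_const _)
            fun t ht => mul_le_mul_of_nonneg_left (hmax ⟨ht.1, ht.2.trans hm.2⟩)
              (hw₀ t ⟨ht.1, ht.2.trans hm.2⟩)
      _ ≤ (1 / 2) * u m := by
          rw [intervalIntegral.integral_mul_const]
          exact mul_le_mul_of_nonneg_right hmass (hu₀ m hm)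
  intro x hx
  have hux : u x ≤ u m := hmax hx
  linarith [h m hm]

-- Gronwall's lemma for a weight that is only integrable: cutting `[a, b]` into pieces of `w`-mass
-- `1 / 2` replaces the usual exponential factor by `2 ^ (n + 1)`.
theorem le_two_pow_mul_of_le_add_integral (n : ℕ) (hab : a ≤ b)
    (hw : IntegrableOn w (Icc a b)) (hw₀ : ∀ t ∈ Icc a b, 0 ≤ w t)
    (hn : ∫ t in a..b, w t ≤ n / 2)
    (hu : ContinuousOn u (Icc a b)) (hu₀ : ∀ t ∈ Icc a b, 0 ≤ u t)
    (h : ∀ x ∈ Icc a b, u x ≤ ε + ∫ t in a..x, w t * u t) :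
    ∀ x ∈ Icc a b, u x ≤ 2 ^ (n + 1) * ε := by
  induction n generalizing a ε with
  | zero =>
    simpa using le_two_mul_of_le_add_integral hab hw hw₀ (by simpa using hn.trans (by simp))
      hu hu₀ h
  | succ n ih =>
    have ha : a ∈ Icc a b := left_mem_Icc.2 hab
    have hε : 0 ≤ ε := by simpa using (hu₀ a ha).trans (h a ha)
    by_cases hhalf : ∫ t in a..b, w t ≤ 1 / 2
    · intro x hx
      calc u x ≤ 2 * ε := le_two_mul_of_le_add_integral hab hw hw₀ hhalf hu hu₀ h x hx
        _ ≤ 2 ^ (n + 1 + 1) * ε := by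
          gcongr
          exact le_self_pow₀ (by norm_num) (by omega)
    obtain ⟨c, hc, hWc⟩ : ∃ c ∈ Icc a b, ∫ t in a..c, w t = 1 / 2 := by
      refine intermediate_value_Icc hab ?_ ⟨by simp, by linarith⟩
      exact (continuousOn_primitive_interval (hw.mono_set (by rw [uIcc_of_le hab]))).mono
        (by rw [uIcc_of_le hab])
    have hIcc_ac : Icc a c ⊆ Icc a b := Icc_subset_Icc le_rfl hc.2
    have hIcc_cb : Icc c b ⊆ Icc a b := Icc_subset_Icc hc.1 le_rfl
    have hleft : ∀ x ∈ Icc a c, u x ≤ 2 * ε :=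
      le_two_mul_of_le_add_integral hc.1 (hw.mono_set hIcc_ac) (fun t ht => hw₀ t (hIcc_ac ht))
        hWc.le (hu.mono hIcc_ac) (fun t ht => hu₀ t (hIcc_ac ht)) (fun x hx => h x (hIcc_ac hx))
    have hwu_int := hw.mul_continuousOn hu isCompact_Icc
    have hright : ∀ x ∈ Icc c b, u x ≤ 2 ^ (n + 1) * (2 * ε) := by
      refine ih hc.2 (hw.mono_set hIcc_cb) (fun t ht => hw₀ t (hIcc_cb ht)) ?_ (hu.mono hIcc_cb)
        (fun t ht => hu₀ t (hIcc_cb ht)) fun x hx => ?_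
      · have := integral_add_adjacent_intervals (hw.intervalIntegrable_of_mem ha hc)
          (hw.intervalIntegrable_of_mem hc (right_mem_Icc.2 hab))
        push_cast at hn
        linarith
      · have hsplit := integral_add_adjacent_intervals (hwu_int.intervalIntegrable_of_mem ha hc)
          (hwu_int.intervalIntegrable_of_mem hc (hIcc_cb hx))
        have hbound : ∫ t in a..c, w t * u t ≤ ε :=
          calc ∫ t in a..c, w t * u t ≤ ∫ t in a..c, w t * (2 * ε) :=
                integral_mono_on hc.1 (hwu_int.intervalIntegrable_of_mem ha hc)
                  ((hw.intervalIntegrable_of_mem ha hc).mul_const _)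
                  fun t ht => mul_le_mul_of_nonneg_left (hleft t ht) (hw₀ t (hIcc_ac ht))
            _ = ε := by rw [intervalIntegral.integral_mul_const, hWc]; ring
        linarith [h x (hIcc_cb hx)]
    intro x hx
    rcases le_total x c with hxc | hcx
    · calc u x ≤ 2 * ε := hleft x ⟨hx.1, hxc⟩
        _ ≤ 2 ^ (n + 1) * (2 * ε) :=
          le_mul_of_one_le_left (by positivity) (one_le_pow₀ (by norm_num))
        _ = 2 ^ (n + 1 + 1) * ε := by ring
    · calc u x ≤ 2 ^ (n + 1) * (2 * ε) := hright x ⟨hcx, hx.2⟩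
        _ = 2 ^ (n + 1 + 1) * ε := by ring

end Gronwall

theorem integral_sq_ne_zero_of_star_eq {g : ℝ → ℂ} {a b x₀ : ℝ} (hab : a < b)
    (hg : ContinuousOn g (Icc a b)) (hreal : ∀ t ∈ Icc a b, star (g t) = g t)
    (hx₀ : x₀ ∈ Icc a b) (hgx₀ : g x₀ ≠ 0) : ∫ t in a..b, g t ^ 2 ≠ 0 := by
  have hre : ∀ t ∈ Icc a b, ((g t).re : ℂ) = g t := fun t ht =>
    Complex.conj_eq_iff_re.1 (hreal t ht)
  have hcast : ∫ t in a..b, g t ^ 2 = ((∫ t in a..b, (g t).re ^ 2 : ℝ) : ℂ) := by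
    rw [← intervalIntegral.integral_ofReal]
    refine integral_congr fun t ht => ?_
    rw [uIcc_of_le hab.le] at ht
    push_cast
    rw [hre t ht]
  rw [hcast, Complex.ofReal_ne_zero]
  have hre₀ : (g x₀).re ≠ 0 := fun h => hgx₀ (by rw [← hre x₀ hx₀, h, Complex.ofReal_zero])
  exact (integral_pos hab ((Complex.continuous_re.comp_continuousOn hg).pow 2)
    (fun t _ => sq_nonneg _) ⟨x₀, hx₀, sq_pos_of_ne_zero hre₀⟩).ne'

theorem hasDerivAt_sub_mul_of_continuousAt {𝕜 : Type*} [NontriviallyNormedField 𝕜]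
    {g : 𝕜 → 𝕜} {a : 𝕜} (hg : ContinuousAt g a) :
    HasDerivAt (fun z => (z - a) * g z) (g a) a := by
  refine hasDerivAt_iff_tendsto_slope.2 ((hg.tendsto.mono_left nhdsWithin_le_nhds).congr' ?_)
  filter_upwards [self_mem_nhdsWithin] with z hz
  rw [slope_def_field, sub_self, zero_mul, sub_zero, mul_div_cancel_left₀ _ (sub_ne_zero.2 hz)]

section SecondOrder

variable {l : ℝ} {q f g : ℝ → ℂ}

theorem norm_add_norm_deriv_le_of_deriv_deriv_eq {r : ℝ → ℂ} {w : ℝ → ℝ} (n : ℕ)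
    (hg : Differentiable ℝ g) (hg' : Differentiable ℝ (deriv g))
    (hode : ∀ x ∈ Icc 0 l, deriv (deriv g) x = q x * g x + r x)
    (hw : IntegrableOn w (Icc 0 l)) (hqw : ∀ t ∈ Icc 0 l, 1 + ‖q t‖ ≤ w t)
    (hn : ∫ t in 0..l, w t ≤ n / 2) (hr : IntegrableOn r (Icc 0 l))
    (h0 : g 0 = 0) (h0' : deriv g 0 = 0) :
    ∀ x ∈ Icc 0 l, ‖g x‖ + ‖deriv g x‖ ≤ 2 ^ (n + 1) * ∫ t in 0..l, ‖r t‖ := by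
  intro x hx
  have hl : 0 ≤ l := hx.1.trans hx.2
  have h0l : (0 : ℝ) ∈ Icc 0 l := left_mem_Icc.2 hl
  set u : ℝ → ℝ := fun t => ‖g t‖ + ‖deriv g t‖
  have hu : Continuous u := hg.continuous.norm.add hg'.continuous.norm
  have hpt : ∀ t ∈ Icc 0 l, ‖deriv g t‖ + ‖deriv (deriv g) t‖ ≤ w t * u t + ‖r t‖ := by
    intro t ht
    calc ‖deriv g t‖ + ‖deriv (deriv g) t‖ ≤ ‖deriv g t‖ + (‖q t‖ * ‖g t‖ + ‖r t‖) := by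
          rw [hode t ht, ← norm_mul]; gcongr; exact norm_add_le _ _
      _ ≤ (1 + ‖q t‖) * u t + ‖r t‖ := by
          simp only [u]; nlinarith [norm_nonneg (q t), norm_nonneg (g t), norm_nonneg (deriv g t)]
      _ ≤ w t * u t + ‖r t‖ := by gcongr; exact hqw t ht
  have hwu : IntegrableOn (fun t => w t * u t) (Icc 0 l) := hw.mul_continuousOn hu.continuousOn
    isCompact_Icc
  have hg'' : IntegrableOn (deriv (deriv g)) (Icc 0 l) :=
    Integrable.mono' (hwu.add hr.norm) (measurable_deriv _).aestronglyMeasurable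
      ((ae_restrict_iff' measurableSet_Icc).2 (.of_forall fun t ht => by
        simp only [Pi.add_apply]; linarith [hpt t ht, norm_nonneg (deriv g t)]))
  refine le_two_pow_mul_of_le_add_integral n hl hw
    (fun t ht => (add_nonneg zero_le_one (norm_nonneg _)).trans (hqw t ht)) hn hu.continuousOn
    (fun t _ => by positivity) (fun y hy => ?_) x hx
  have hy₀ : IntervalIntegrable (fun t => ‖r t‖) volume 0 y :=
    IntegrableOn.intervalIntegrable_of_mem hr.norm h0l hy
  have hy₁ : IntervalIntegrable (fun t => ‖deriv g t‖) volume 0 y :=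
    hg'.continuous.norm.intervalIntegrable 0 y
  have hy₂ : IntervalIntegrable (fun t => ‖deriv (deriv g) t‖) volume 0 y :=
    IntegrableOn.intervalIntegrable_of_mem hg''.norm h0l hy
  have hy₃ : IntervalIntegrable (fun t => w t * u t) volume 0 y :=
    hwu.intervalIntegrable_of_mem h0l hy
  have hgy : g y = ∫ t in 0..y, deriv g t := by
    rw [integral_deriv_eq_sub (fun t _ => hg t) (hg'.continuous.intervalIntegrable 0 y), h0,
      sub_zero]
  have hg'y : deriv g y = ∫ t in 0..y, deriv (deriv g) t := by
    rw [integral_deriv_eq_sub (fun t _ => hg' t) (hg''.intervalIntegrable_of_mem h0l hy), h0',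
      sub_zero]
  calc ‖g y‖ + ‖deriv g y‖ ≤ (∫ t in 0..y, ‖deriv g t‖) + ∫ t in 0..y, ‖deriv (deriv g) t‖ := by
        rw [hgy, hg'y]
        exact add_le_add (norm_integral_le_integral_norm hy.1)
          (norm_integral_le_integral_norm hy.1)
    _ ≤ (∫ t in 0..y, w t * u t) + ∫ t in 0..y, ‖r t‖ := by
        rw [← integral_add hy₁ hy₂, ← integral_add hy₃ hy₀]
        exact integral_mono_on hy.1 (hy₁.add hy₂) (hy₃.add hy₀)
          fun t ht => hpt t ⟨ht.1, ht.2.trans hy.2⟩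
    _ ≤ (∫ t in 0..l, ‖r t‖) + ∫ t in 0..y, w t * u t := by
        rw [add_comm]
        gcongr
        exact integral_mono_interval le_rfl hy.1 hy.2 (.of_forall fun t => norm_nonneg _)
          (IntegrableOn.intervalIntegrable_of_mem hr.norm h0l (right_mem_Icc.2 hl))

structure IsSolutionOn (q : ℝ → ℂ) (l : ℝ) (g : ℝ → ℂ) : Prop where
  differentiable : Differentiable ℝ g
  differentiable_deriv : Differentiable ℝ (deriv g)
  deriv_deriv : ∀ x ∈ Icc 0 l, deriv (deriv g) x = q x * g x

namespace IsSolutionOn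

theorem const_mul (hg : IsSolutionOn q l g) (c : ℂ) : IsSolutionOn q l (fun t => c * g t) := by
  have hd : deriv (fun t => c * g t) = fun t => c * deriv g t :=
    funext fun t => deriv_const_mul c (hg.differentiable t)
  refine ⟨hg.differentiable.const_mul c, ?_, fun x hx => ?_⟩
  · rw [hd]; exact hg.differentiable_deriv.const_mul c
  · rw [hd, deriv_const_mul c (hg.differentiable_deriv x), hg.deriv_deriv x hx]; ring

theorem norm_sub_le_two_pow_mul {p : ℝ → ℂ} {w : ℝ → ℝ} (n : ℕ) (hf : IsSolutionOn p l f)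
    (hg : IsSolutionOn q l g) (hw : IntegrableOn w (Icc 0 l))
    (hpw : ∀ t ∈ Icc 0 l, 1 + ‖p t‖ ≤ w t) (hn : ∫ t in 0..l, w t ≤ n / 2)
    (hpq : IntegrableOn (fun t => (p t - q t) * g t) (Icc 0 l))
    (h0 : f 0 = g 0) (h0' : deriv f 0 = deriv g 0) :
    ∀ x ∈ Icc 0 l, ‖f x - g x‖ ≤ 2 ^ (n + 1) * ∫ t in 0..l, ‖(p t - q t) * g t‖ := by
  have hd : deriv (f - g) = deriv f - deriv g :=
    funext fun x => deriv_sub (hf.differentiable x) (hg.differentiable x)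
  have hd' : Differentiable ℝ (deriv (f - g)) := by
    rw [hd]; exact hf.differentiable_deriv.sub hg.differentiable_deriv
  have hode : ∀ x ∈ Icc 0 l,
      deriv (deriv (f - g)) x = p x * (f - g) x + (p x - q x) * g x := by
    intro x hx
    rw [hd, deriv_sub (hf.differentiable_deriv x) (hg.differentiable_deriv x),
      hf.deriv_deriv x hx, hg.deriv_deriv x hx, Pi.sub_apply]
    ring
  intro x hx
  have := norm_add_norm_deriv_le_of_deriv_deriv_eq n (hf.differentiable.sub hg.differentiable)
    hd' hode hw hpw hn hpq (by simp [h0]) (by simp [hd, h0']) x hx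
  exact le_of_add_le_of_nonneg_left this (norm_nonneg _)

theorem eqOn (hf : IsSolutionOn q l f) (hg : IsSolutionOn q l g) (hq : IntegrableOn q (Icc 0 l))
    (h0 : f 0 = g 0) (h0' : deriv f 0 = deriv g 0) : EqOn f g (Icc 0 l) := by
  obtain ⟨n, hn⟩ := exists_nat_ge (2 * ∫ t in 0..l, (1 + ‖q t‖))
  intro x hx
  have := hf.norm_sub_le_two_pow_mul n hg ((integrableOn_const (by simp)).add hq.norm)
    (fun t _ => le_rfl) (by simp only [Pi.add_apply]; linarith) (by simp) h0 h0' x hx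
  simpa [sub_eq_zero] using this

theorem eqOn_deriv_zero_mul (hf : IsSolutionOn q l f) (hg : IsSolutionOn q l g)
    (hq : IntegrableOn q (Icc 0 l)) (hf0 : f 0 = 0) (hg0 : g 0 = 0) (hg0' : deriv g 0 = 1) :
    EqOn f (fun t => deriv f 0 * g t) (Icc 0 l) :=
  hf.eqOn (hg.const_mul _) hq (by simp [hf0, hg0])
    (by simp [deriv_const_mul _ (hg.differentiable 0), hg0'])

theorem star_eqOn (hg : IsSolutionOn q l g) (hq : IntegrableOn q (Icc 0 l))
    (hq_real : ∀ t ∈ Icc 0 l, star (q t) = q t) (h0 : star (g 0) = g 0)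
    (h0' : star (deriv g 0) = deriv g 0) : ∀ t ∈ Icc 0 l, star (g t) = g t := by
  have hg_star : IsSolutionOn q l (fun t => star (g t)) := by
    refine ⟨hg.differentiable.star, ?_, fun x hx => ?_⟩
    · rw [deriv.star']; exact hg.differentiable_deriv.star
    · rw [deriv.star', deriv.star, hg.deriv_deriv x hx, star_mul', hq_real x hx]
  exact hg_star.eqOn hg hq h0 (by rw [deriv.star, h0'])

theorem wronskian_sub {z₁ z₂ : ℂ} (hl : 0 ≤ l) (hf : IsSolutionOn (fun t => q t - z₁) l f)
    (hg : IsSolutionOn (fun t => q t - z₂) l g) :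
    (f l * deriv g l - deriv f l * g l) - (f 0 * deriv g 0 - deriv f 0 * g 0)
      = (z₁ - z₂) * ∫ t in 0..l, f t * g t := by
  have hfg : Continuous fun t => f t * g t := hf.differentiable.continuous.mul
    hg.differentiable.continuous
  rw [← intervalIntegral.integral_const_mul]
  refine (integral_eq_sub_of_hasDerivAt_of_le (f := fun t => f t * deriv g t - deriv f t * g t)
    hl ?_ (fun x hx => ?_) ((hfg.intervalIntegrable 0 l).const_mul (z₁ - z₂))).symm
  · exact ((hf.differentiable.continuous.mul hg.differentiable_deriv.continuous).sub
      (hf.differentiable_deriv.continuous.mul hg.differentiable.continuous)).continuousOn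
  · have := ((hf.differentiable x).hasDerivAt.mul (hg.differentiable_deriv x).hasDerivAt).sub
      ((hf.differentiable_deriv x).hasDerivAt.mul (hg.differentiable x).hasDerivAt)
    refine this.congr_deriv ?_
    rw [hf.deriv_deriv x (Ioo_subset_Icc_self hx), hg.deriv_deriv x (Ioo_subset_Icc_self hx)]
    ring

theorem deriv_mul_eq_one {z : ℂ} (hl : 0 ≤ l) (hf : IsSolutionOn (fun t => q t - z) l f)
    (hg : IsSolutionOn (fun t => q t - z) l g) (hf0 : f 0 = 0) (hf0' : deriv f 0 = 1)
    (hg0 : g 0 = 1) (hg0' : deriv g 0 = 0) (hfl : f l = 0) : deriv f l * g l = 1 := by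
  have := hf.wronskian_sub hl hg
  simp only [hf0, hf0', hg0, hg0', hfl, sub_self] at this
  linear_combination -this

theorem continuousAt_integral_mul {u : ℂ → ℝ → ℂ} {φ : ℝ → ℂ} {z₀ : ℂ}
    (hl : 0 ≤ l) (hq : IntegrableOn q (Icc 0 l))
    (hu : ∀ z, IsSolutionOn (fun t => q t - z) l (u z)) (h0 : ∀ z, u z 0 = u z₀ 0)
    (h0' : ∀ z, deriv (u z) 0 = deriv (u z₀) 0) (hφ : Continuous φ) :
    ContinuousAt (fun z => ∫ t in 0..l, u z t * φ t) z₀ := by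
  obtain ⟨n, hn⟩ := exists_nat_ge (2 * ∫ t in 0..l, (2 + ‖q t - z₀‖))
  set C := 2 ^ (n + 1) * ∫ t in 0..l, ‖u z₀ t‖
  have hu₀ : Continuous (u z₀) := (hu z₀).differentiable.continuous
  have hclose : ∀ z, dist z z₀ < 1 → ∀ x ∈ Icc 0 l, ‖u z x - u z₀ x‖ ≤ C * dist z z₀ := by
    intro z hz x hx
    have hdiff : ∀ t, (q t - z - (q t - z₀)) * u z₀ t = (z₀ - z) * u z₀ t := fun t => by ring
    have := (hu z).norm_sub_le_two_pow_mul n (hu z₀) (w := fun t => 2 + ‖q t - z₀‖)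
      ((integrableOn_const (by simp)).add ((hq.sub (integrableOn_const (by simp))).norm))
      (fun t _ => by
        have := norm_sub_le_norm_sub_add_norm_sub (q t) z₀ z
        rw [dist_eq_norm] at hz
        linarith [norm_sub_rev z z₀])
      (by linarith)
      ((continuous_const.mul hu₀).integrableOn_Icc.congr_fun (fun t _ => (hdiff t).symm)
        measurableSet_Icc)
      (h0 z) (h0' z) x hx
    simp_rw [hdiff, norm_mul, intervalIntegral.integral_const_mul, norm_sub_rev z₀ z,
      ← dist_eq_norm z z₀] at this
    exact this.trans_eq (by ring)
  refine continuousAt_of_locally_lipschitz zero_lt_one (C * ∫ t in 0..l, ‖φ t‖) fun z hz => ?_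
  have hint : ∀ z, IntervalIntegrable (fun t => u z t * φ t) volume 0 l := fun z =>
    ((hu z).differentiable.continuous.mul hφ).intervalIntegrable 0 l
  rw [dist_eq_norm, ← intervalIntegral.integral_sub (hint z) (hint z₀)]
  calc ‖∫ t in 0..l, (u z t * φ t - u z₀ t * φ t)‖
      ≤ ∫ t in 0..l, C * dist z z₀ * ‖φ t‖ := by
        refine norm_integral_le_of_norm_le hl (.of_forall fun t ht => ?_)
          ((hφ.norm.intervalIntegrable 0 l).const_mul _)
        rw [← sub_mul, norm_mul]
        gcongr
        exact hclose z hz t (Ioc_subset_Icc_self ht)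
    _ = C * (∫ t in 0..l, ‖φ t‖) * dist z z₀ := by
        rw [intervalIntegral.integral_const_mul]; ring

theorem hasDerivAt_apply {u : ℂ → ℝ → ℂ} {z₀ : ℂ} (hl : 0 ≤ l) (hq : IntegrableOn q (Icc 0 l))
    (hu : ∀ z, IsSolutionOn (fun t => q t - z) l (u z)) (hu0 : ∀ z, u z 0 = 0)
    (hu0' : ∀ z, deriv (u z) 0 = 1) (hg : IsSolutionOn (fun t => q t - z₀) l g) (hg0 : g 0 = 1)
    (hg0' : deriv g 0 = 0) (hul : u z₀ l = 0) :
    HasDerivAt (fun z => u z l) (g l * ∫ t in 0..l, u z₀ t ^ 2) z₀ := by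
  have hW := (hu z₀).deriv_mul_eq_one hl hg (hu0 z₀) (hu0' z₀) hg0 hg0' hul
  have hrepr : (fun z => u z l) = fun z => g l * ((z - z₀) * ∫ t in 0..l, u z t * u z₀ t) := by
    funext z
    have := (hu z).wronskian_sub hl (hu z₀)
    simp only [hul, hu0] at this
    linear_combination (-u z l) * hW + g l * this
  have hI := continuousAt_integral_mul (z₀ := z₀) hl hq hu (fun z => by rw [hu0, hu0])
    (fun z => by rw [hu0', hu0']) (hu z₀).differentiable.continuous
  rw [hrepr]
  simpa only [sq] using (hasDerivAt_sub_mul_of_continuousAt hI).const_mul (g l)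

theorem of_schrodinger {V : ℝ → ℝ} {z : ℂ}
    (hreg : ∀ x : ℝ, DifferentiableAt ℝ g x ∧ DifferentiableAt ℝ (deriv g) x)
    (hode : ∀ x ∈ Icc 0 l, -(deriv (deriv g) x) + (V x : ℂ) * g x = z * g x) :
    IsSolutionOn (fun t => (V t : ℂ) - z) l g :=
  ⟨fun x => (hreg x).1, fun x => (hreg x).2, fun x hx => by linear_combination -hode x hx⟩

end IsSolutionOn

end SecondOrder

theorem dirichlet_eigenvalue_simple_zero_general
    (l : ℝ) (hl : 0 < l) (V : ℝ → ℝ)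
    (hV : MemLp V 2 (volume.restrict (Icc 0 l)))
    (u₁ u₂ : ℂ → ℝ → ℂ)
    (hreg₁ : ∀ z : ℂ, ∀ x : ℝ, DifferentiableAt ℝ (u₁ z) x ∧
      DifferentiableAt ℝ (deriv (u₁ z)) x)
    (hreg₂ : ∀ z : ℂ, ∀ x : ℝ, DifferentiableAt ℝ (u₂ z) x ∧
      DifferentiableAt ℝ (deriv (u₂ z)) x)
    (hode₁ : ∀ z : ℂ, ∀ x ∈ Icc 0 l,
      -(deriv (deriv (u₁ z)) x) + (V x : ℂ) * u₁ z x = z * u₁ z x)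
    (hode₂ : ∀ z : ℂ, ∀ x ∈ Icc 0 l,
      -(deriv (deriv (u₂ z)) x) + (V x : ℂ) * u₂ z x = z * u₂ z x)
    (hic₁ : ∀ z : ℂ, u₁ z 0 = 0 ∧ deriv (u₁ z) 0 = 1)
    (hic₂ : ∀ z : ℂ, u₂ z 0 = 1 ∧ deriv (u₂ z) 0 = 0)
    -- `μ` is a Dirichlet eigenvalue: there is a nonzero eigenfunction
    (μ : ℝ)
    (hμ : ∃ f : ℝ → ℂ,
      (∀ x : ℝ, DifferentiableAt ℝ f x ∧ DifferentiableAt ℝ (deriv f) x) ∧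
      (∀ x ∈ Icc 0 l, -(deriv (deriv f) x) + (V x : ℂ) * f x = (μ : ℂ) * f x) ∧
      f 0 = 0 ∧ f l = 0 ∧ (∃ x ∈ Icc 0 l, f x ≠ 0)) :
    u₁ (μ : ℂ) l = 0 ∧
    deriv (fun z : ℂ => u₁ z l) (μ : ℂ)
      = u₂ (μ : ℂ) l * ∫ s in (0:ℝ)..l, (u₁ (μ : ℂ) s) ^ 2 ∧
    deriv (fun z : ℂ => u₁ z l) (μ : ℂ) ≠ 0 := by
  obtain ⟨f, hf_reg, hf_ode, hf0, hfl, x₀, hx₀, hfx₀⟩ := hμ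
  have hV_int : IntegrableOn (fun t => (V t : ℂ)) (Icc 0 l) := (hV.integrable one_le_two).ofReal
  have hVμ : IntegrableOn (fun t => (V t : ℂ) - μ) (Icc 0 l) :=
    hV_int.sub (integrableOn_const (by simp))
  have h₁ z := IsSolutionOn.of_schrodinger (hreg₁ z) (hode₁ z)
  have h₂ := IsSolutionOn.of_schrodinger (hreg₂ μ) (hode₂ μ)
  have hf_eq := (IsSolutionOn.of_schrodinger hf_reg hf_ode).eqOn_deriv_zero_mul (h₁ μ) hVμ hf0
    (hic₁ μ).1 (hic₁ μ).2
  have hfx₀' : deriv f 0 * u₁ μ x₀ ≠ 0 := fun h => hfx₀ ((hf_eq hx₀).trans h)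
  have hzero : u₁ μ l = 0 := by
    have := hf_eq (right_mem_Icc.2 hl.le)
    rw [hfl, eq_comm, mul_eq_zero] at this
    exact this.resolve_left (left_ne_zero_of_mul hfx₀')
  have hW := (h₁ μ).deriv_mul_eq_one hl.le h₂ (hic₁ μ).1 (hic₁ μ).2 (hic₂ μ).1 (hic₂ μ).2 hzero
  have hderiv := IsSolutionOn.hasDerivAt_apply hl.le hV_int h₁ (fun z => (hic₁ z).1)
    (fun z => (hic₁ z).2) h₂ (hic₂ μ).1 (hic₂ μ).2 hzero
  have hreal := (h₁ μ).star_eqOn hVμ (fun t _ => by simp) (by simp [(hic₁ μ).1])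
    (by simp [(hic₁ μ).2])
  have hI := integral_sq_ne_zero_of_star_eq hl (h₁ μ).differentiable.continuous.continuousOn
    hreal hx₀ (right_ne_zero_of_mul hfx₀')
  refine ⟨hzero, hderiv.deriv, ?_⟩
  rw [hderiv.deriv]
  exact mul_ne_zero (right_ne_zero_of_mul_eq_one hW) hI

/-- If `μ` is an eigenvalue of the Dirichlet operator
`D f = -f'' + V f`, `f(0)=f(l)=0`, on `[0,l]`, then `u₁(l;μ) = 0`, and
`∂_z u₁(l;z)|_{z=μ} = u₂(l;μ) ∫₀ˡ u₁(s;μ)² ds ≠ 0`; in particular `μ` is a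
simple zero of the entire function `z ↦ u₁(l;z)`. -/
theorem dirichlet_eigenvalue_simple_zero
    (l : ℝ) (hl : 0 < l) (V : ℝ → ℝ)
    (hV : MemLp V 2 (volume.restrict (Icc 0 l)))
    (u₁ u₂ : ℂ → ℝ → ℂ)
    (hreg₁ : ∀ z : ℂ, ∀ x : ℝ, DifferentiableAt ℝ (u₁ z) x ∧
      DifferentiableAt ℝ (deriv (u₁ z)) x)
    (hreg₂ : ∀ z : ℂ, ∀ x : ℝ, DifferentiableAt ℝ (u₂ z) x ∧
      DifferentiableAt ℝ (deriv (u₂ z)) x)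
    (hode₁ : ∀ z : ℂ, ∀ x ∈ Icc 0 l,
      -(deriv (deriv (u₁ z)) x) + (V x : ℂ) * u₁ z x = z * u₁ z x)
    (hode₂ : ∀ z : ℂ, ∀ x ∈ Icc 0 l,
      -(deriv (deriv (u₂ z)) x) + (V x : ℂ) * u₂ z x = z * u₂ z x)
    (hic₁ : ∀ z : ℂ, u₁ z 0 = 0 ∧ deriv (u₁ z) 0 = 1)
    (hic₂ : ∀ z : ℂ, u₂ z 0 = 1 ∧ deriv (u₂ z) 0 = 0)
    -- `u₁(l;·)` is entire in `z`
    (hent : Differentiable ℂ (fun z : ℂ => u₁ z l))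
    -- `μ` is a Dirichlet eigenvalue: there is a nonzero eigenfunction
    (μ : ℝ)
    (hμ : ∃ f : ℝ → ℂ,
      (∀ x : ℝ, DifferentiableAt ℝ f x ∧ DifferentiableAt ℝ (deriv f) x) ∧
      (∀ x ∈ Icc 0 l, -(deriv (deriv f) x) + (V x : ℂ) * f x = (μ : ℂ) * f x) ∧
      f 0 = 0 ∧ f l = 0 ∧ (∃ x ∈ Icc 0 l, f x ≠ 0)) :
    u₁ (μ : ℂ) l = 0 ∧
    deriv (fun z : ℂ => u₁ z l) (μ : ℂ)
      = u₂ (μ : ℂ) l * ∫ s in (0:ℝ)..l, (u₁ (μ : ℂ) s) ^ 2 ∧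
    deriv (fun z : ℂ => u₁ z l) (μ : ℂ) ≠ 0 :=
  dirichlet_eigenvalue_simple_zero_general l hl V hV u₁ u₂ hreg₁ hreg₂ hode₁ hode₂ hic₁ hic₂ μ hμ
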